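/- Let l ≥ 1, s ≥ 0 and let G be a K_3-free graph on n vertices. Suppose U ⊆ V(G) with |U| = s is such that G[U] is a complete bipartite graph with parts of sizes x and y where x ≥ y ≥ 0 and x + y = s, G[V(G) \ U] is S_l-free, and I is a maximum independent set of G[V(G) \ U] with |I| > ⌊(n−s)/2⌋. Then e(G) ≤ s·|I| + (l−1)(n−s−|I|) + y·(n − 2|I| − y). -/

import Mathlib

open SimpleGraph

/-- `G` contains a copy of `H` (an injective graph homomorphism). -/
def Contains {α β : Type*} (G : SimpleGraph β) (H : SimpleGraph α) : Prop :=
  ∃ f : α ↪ β, ∀ a b, H.Adj a b → G.Adj (f a) (f b)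

/-- `G` is `H`-free. -/
def Free {α β : Type*} (G : SimpleGraph β) (H : SimpleGraph α) : Prop := ¬ Contains G H

/-- The Turán-type extremal number for a property `P` of graphs on `Fin n`. -/
noncomputable def exNum (n : ℕ) (P : SimpleGraph (Fin n) → Prop) : ℕ :=
  sSup {m | ∃ G : SimpleGraph (Fin n), P G ∧ G.edgeSet.ncard = m}

/-- The star forest consisting of `c` disjoint copies of the star `S_l`. -/
def starForest (c l : ℕ) : SimpleGraph (Fin c × (Unit ⊕ Fin l)) :=
  SimpleGraph.fromRel (fun x y => x.1 = y.1 ∧ x.2.isLeft ≠ y.2.isLeft)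

/-- The join of two graphs. -/
def join {α β : Type*} (G : SimpleGraph α) (H : SimpleGraph β) : SimpleGraph (α ⊕ β) :=
  SimpleGraph.fromRel (fun x y => match x, y with
    | Sum.inl a, Sum.inl b => G.Adj a b
    | Sum.inr a, Sum.inr b => H.Adj a b
    | _, _ => True)

/-!
Write `e(S, T)` for the number of ordered adjacent pairs in `S × T` and `W = Uᶜ`, so that
`2 e(G) = e(U, U) + 2 e(U, W) + e(W, W)`. As `U₁` and `U₂` are independent, `e(U, U) ≤ 2xy`.
Every edge inside `W` meets `W \ I` because `I` is independent, and vertices of `W` have fewer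
than `l` neighbours in `W`, so `e(W, W) ≤ 2 (l - 1) |W \ I|`. Between `U` and `W`, let `A` be
the set of vertices of `W` with a neighbour in `U₂`. Triangle-freeness makes the neighbourhood
in `W` of a vertex of `U₁` independent, hence of size at most `|I|`, and disjoint from `A`, so
`e(U₁, W) ≤ x · min(|I|, |W| - |A|)` while `e(U₂, W) ≤ y |A|`; as `y ≤ x`, these add up to at
most `x |I| + y (|W| - |I|)`.
-/

open Finset

theorem contains_iff_isContained {α β : Type*} {G : SimpleGraph β} {H : SimpleGraph α} :
    Contains G H ↔ H ⊑ G :=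
  ⟨fun ⟨f, hf⟩ => ⟨⟨⟨f, hf _ _⟩, f.injective⟩⟩,
    fun ⟨c⟩ => ⟨c.toEmbedding, fun _ _ h => c.toHom.map_adj h⟩⟩

theorem free_iff_free {α β : Type*} {G : SimpleGraph β} {H : SimpleGraph α} :
    _root_.Free G H ↔ H.Free G :=
  not_congr contains_iff_isContained

namespace SimpleGraph

variable {V : Type*} {G : SimpleGraph V}

theorem cliqueFree_three_of_free (h : _root_.Free G (completeGraph (Fin 3))) :
    G.CliqueFree 3 := by
  simpa using cliqueFree_iff_top_free.2 (free_iff_free.1 h)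

theorem completeBipartiteGraph_unit_isContained {l : ℕ} {v : V} (f : Fin l ↪ V)
    (hf : ∀ i, G.Adj v (f i)) : completeBipartiteGraph Unit (Fin l) ⊑ G := by
  refine ⟨⟨⟨Sum.elim (fun _ => v) f, ?_⟩, ?_⟩⟩
  · rintro (_ | i) (_ | j) h <;> simp at h ⊢
    · exact hf j
    · exact (hf i).symm
  · rintro (_ | i) (_ | j) h <;> simp at h ⊢
    · exact (hf j).ne h
    · exact (hf i).ne h.symm
    · exact h

theorem isIndepSet_and_isIndepSet_of_adj_iff [DecidableEq V] {U₁ U₂ : Finset V}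
    (hdisj : Disjoint U₁ U₂) (h : ∀ a ∈ U₁ ∪ U₂, ∀ b ∈ U₁ ∪ U₂,
      (G.Adj a b ↔ ((a ∈ U₁ ∧ b ∈ U₂) ∨ (a ∈ U₂ ∧ b ∈ U₁)))) :
    G.IsIndepSet (U₁ : Set V) ∧ G.IsIndepSet (U₂ : Set V) := by
  constructor
  · intro a ha b hb _ hab
    rcases (h a (mem_union_left _ ha) b (mem_union_left _ hb)).1 hab with ⟨-, hb'⟩ | ⟨ha', -⟩
    exacts [Finset.disjoint_left.1 hdisj hb hb', Finset.disjoint_left.1 hdisj ha ha']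
  · intro a ha b hb _ hab
    rcases (h a (mem_union_right _ ha) b (mem_union_right _ hb)).1 hab with ⟨ha', -⟩ | ⟨-, hb'⟩
    exacts [Finset.disjoint_right.1 hdisj ha ha', Finset.disjoint_right.1 hdisj hb hb']

section Interedges

variable [DecidableRel G.Adj]

theorem card_filter_adj_lt_of_free_induce {W : Finset V} {l : ℕ} {v : V}
    (hfree : (completeBipartiteGraph Unit (Fin l)).Free (G.induce (W : Set V))) (hv : v ∈ W) :
    #{w ∈ W | G.Adj v w} < l := by
  by_contra! h
  obtain ⟨f⟩ : Nonempty (Fin l ↪ {w // w ∈ W.filter (G.Adj v)}) :=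
    Function.Embedding.nonempty_of_card_le (by simpa using h)
  let g : {w // w ∈ W.filter (G.Adj v)} ↪ (W : Set V) :=
    ⟨fun w => ⟨w, (mem_filter.1 w.2).1⟩, fun _ _ h => Subtype.ext (by simpa using h)⟩
  exact hfree (completeBipartiteGraph_unit_isContained (v := ⟨v, hv⟩) (f.trans g)
    fun i => (mem_filter.1 (f i).2).2)

theorem card_filter_adj_le_of_cliqueFree (h3 : G.CliqueFree 3) {W : Finset V} {k : ℕ}
    (hmax : ∀ J ⊆ W, G.IsIndepSet (J : Set V) → #J ≤ k) (v : V) :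
    #{w ∈ W | G.Adj v w} ≤ k :=
  hmax _ (filter_subset _ _) fun _ ha _ hb =>
    G.isIndepSet_neighborSet_of_triangleFree h3 v (mem_filter.1 ha).2 (mem_filter.1 hb).2

theorem card_interedges_eq_sum (s t : Finset V) :
    #(G.interedges s t) = ∑ v ∈ s, #{w ∈ t | G.Adj v w} := by
  simp only [interedges_def, card_filter, sum_product]

theorem card_interedges_comm (s t : Finset V) : #(G.interedges s t) = #(G.interedges t s) :=
  have := G.symm
  Rel.card_interedges_comm s t

theorem card_interedges_le_card_mul {s t : Finset V} {d : ℕ}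
    (h : ∀ v ∈ s, #{w ∈ t | G.Adj v w} ≤ d) : #(G.interedges s t) ≤ #s * d := by
  rw [card_interedges_eq_sum]
  exact sum_le_card_nsmul _ _ _ h

theorem interedges_eq_empty {s t : Finset V} (h : ∀ v ∈ s, ∀ w ∈ t, ¬G.Adj v w) :
    G.interedges s t = ∅ := by
  refine eq_empty_of_forall_notMem fun ⟨v, w⟩ hvw => ?_
  obtain ⟨hv, hw, hadj⟩ := (G.mk_mem_interedges_iff).1 hvw
  exact h v hv w hw hadj

theorem interedges_self_eq_empty {s : Finset V} (h : G.IsIndepSet (s : Set V)) :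
    G.interedges s s = ∅ :=
  interedges_eq_empty fun _ hv _ hw hvw => h hv hw hvw.ne hvw

variable [DecidableEq V]

theorem card_interedges_union_left {s s' : Finset V} (h : Disjoint s s') (t : Finset V) :
    #(G.interedges (s ∪ s') t) = #(G.interedges s t) + #(G.interedges s' t) := by
  simp only [card_interedges_eq_sum, sum_union h]

theorem card_interedges_union_right (s : Finset V) {t t' : Finset V} (h : Disjoint t t') :
    #(G.interedges s (t ∪ t')) = #(G.interedges s t) + #(G.interedges s t') := by
  simp only [card_interedges_comm (s := s), card_interedges_union_left h]

theorem two_mul_card_edgeFinset_eq [Fintype V] (U : Finset V) :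
    2 * #G.edgeFinset =
      #(G.interedges U U) + 2 * #(G.interedges U Uᶜ) + #(G.interedges Uᶜ Uᶜ) := by
  have hdisj : Disjoint U Uᶜ := disjoint_compl_right
  rw [← sum_degrees_eq_twice_card_edges]
  simp only [← card_neighborFinset_eq_degree, neighborFinset_eq_filter]
  rw [← card_interedges_eq_sum, ← union_compl U, card_interedges_union_left hdisj,
    card_interedges_union_right _ hdisj, card_interedges_union_right _ hdisj,
    card_interedges_comm Uᶜ U]
  ring

theorem card_interedges_union_self_le {U₁ U₂ : Finset V} (hdisj : Disjoint U₁ U₂)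
    (h₁ : G.IsIndepSet (U₁ : Set V)) (h₂ : G.IsIndepSet (U₂ : Set V)) :
    #(G.interedges (U₁ ∪ U₂) (U₁ ∪ U₂)) ≤ 2 * (#U₁ * #U₂) := by
  rw [card_interedges_union_left hdisj, card_interedges_union_right _ hdisj,
    card_interedges_union_right _ hdisj, interedges_self_eq_empty h₁,
    interedges_self_eq_empty h₂, card_interedges_comm U₂]
  have := card_interedges_le_mul G U₁ U₂
  simp only [card_empty]
  omega

theorem card_interedges_self_le_of_isIndepSet {W I : Finset V} {d : ℕ} (hIW : I ⊆ W)
    (hI : G.IsIndepSet (I : Set V)) (hdeg : ∀ v ∈ W \ I, #{w ∈ W | G.Adj v w} ≤ d) :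
    #(G.interedges W W) ≤ 2 * (#(W \ I) * d) := by
  have hsplit (s : Finset V) :
      #(G.interedges s W) = #(G.interedges s (W \ I)) + #(G.interedges s I) := by
    rw [← card_interedges_union_right _ sdiff_disjoint, sdiff_union_of_subset hIW]
  calc #(G.interedges W W)
      = #(G.interedges (W \ I) W) + #(G.interedges I W) := by
        rw [← card_interedges_union_left sdiff_disjoint, sdiff_union_of_subset hIW]
    _ = #(G.interedges (W \ I) W) + #(G.interedges (W \ I) I) := by
        rw [hsplit I, interedges_self_eq_empty hI, card_empty, add_zero, card_interedges_comm I]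
    _ ≤ #(G.interedges (W \ I) W) + #(G.interedges (W \ I) W) := by
        gcongr
        exact G.interedges_mono subset_rfl hIW
    _ ≤ 2 * (#(W \ I) * d) := by
        rw [← two_mul]
        exact Nat.mul_le_mul_left 2 (card_interedges_le_card_mul hdeg)

theorem card_interedges_add_card_interedges_le (h3 : G.CliqueFree 3) {U₁ U₂ W : Finset V}
    {k : ℕ} (hU : ∀ u ∈ U₁, ∀ u' ∈ U₂, G.Adj u u') (hcard : #U₂ ≤ #U₁)
    (hmax : ∀ J ⊆ W, G.IsIndepSet (J : Set V) → #J ≤ k) :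
    ((#(G.interedges U₁ W) + #(G.interedges U₂ W) : ℕ) : ℤ) ≤
      #U₁ * k + #U₂ * ((#W : ℤ) - k) := by
  set A := {w ∈ W | ∃ u ∈ U₂, G.Adj w u}
  have hA : A ⊆ W := filter_subset _ _
  have hsplit (s : Finset V) :
      #(G.interedges s W) = #(G.interedges s (W \ A)) + #(G.interedges s A) := by
    rw [← card_interedges_union_right _ sdiff_disjoint, sdiff_union_of_subset hA]
  have h₁ : #(G.interedges U₁ W) ≤ #U₁ * k :=
    card_interedges_le_card_mul fun v _ => card_filter_adj_le_of_cliqueFree h3 hmax v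
  have h₁' : #(G.interedges U₁ W) ≤ #U₁ * #(W \ A) := by
    -- a common neighbour of `u ∈ U₁` and `u' ∈ U₂` would close a triangle
    have : G.interedges U₁ A = ∅ := interedges_eq_empty fun u hu w hw huw => by
      obtain ⟨-, u', hu', hwu'⟩ := mem_filter.1 hw
      exact G.isIndepSet_neighborSet_of_triangleFree h3 u' (hU u hu u' hu').symm hwu'.symm
        huw.ne huw
    rw [hsplit, this, card_empty, add_zero]
    exact card_interedges_le_mul _ _ _
  have h₂ : #(G.interedges U₂ W) ≤ #U₂ * #A := by
    have : G.interedges U₂ (W \ A) = ∅ := interedges_eq_empty fun u hu w hw huw =>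
      (mem_sdiff.1 hw).2 (mem_filter.2 ⟨(mem_sdiff.1 hw).1, u, hu, huw.symm⟩)
    rw [hsplit, this, card_empty, zero_add]
    exact card_interedges_le_mul _ _ _
  have hA' : (#(W \ A) : ℤ) = #W - #A := by
    rw [card_sdiff_of_subset hA, Nat.cast_sub (card_le_card hA)]
  push_cast
  rcases le_or_gt (#A : ℤ) (#W - k) with hAk | hAk
  · have : (#U₂ : ℤ) * #A ≤ #U₂ * (#W - k) := by gcongr
    linarith [show ((#(G.interedges U₁ W) : ℕ) : ℤ) ≤ #U₁ * k by exact_mod_cast h₁,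
      show ((#(G.interedges U₂ W) : ℕ) : ℤ) ≤ #U₂ * #A by exact_mod_cast h₂]
  · have : (0 : ℤ) ≤ (#U₁ - #U₂) * (#A - (#W - k)) := by
      apply mul_nonneg <;> [exact sub_nonneg.2 (by exact_mod_cast hcard); linarith]
    linarith [show ((#(G.interedges U₁ W) : ℕ) : ℤ) ≤ #U₁ * (#W - #A) by
        rw [← hA']; exact_mod_cast h₁',
      show ((#(G.interedges U₂ W) : ℕ) : ℤ) ≤ #U₂ * #A by exact_mod_cast h₂]

end Interedges

end SimpleGraph

theorem stmt15_general (l s n x y : ℕ) (hl : 1 ≤ l) (G : SimpleGraph (Fin n))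
    (hG3 : _root_.Free G (completeGraph (Fin 3)))
    (U U₁ U₂ : Finset (Fin n)) (hUcard : U.card = s)
    (hpart : U₁ ∪ U₂ = U) (hdisj : Disjoint U₁ U₂)
    (hx : U₁.card = x) (hy : U₂.card = y) (hxy : y ≤ x) (hxys : x + y = s)
    (hbip : ∀ a ∈ U, ∀ b ∈ U,
      (G.Adj a b ↔ ((a ∈ U₁ ∧ b ∈ U₂) ∨ (a ∈ U₂ ∧ b ∈ U₁))))
    (hSl : _root_.Free (SimpleGraph.induce (↑(Uᶜ) : Set (Fin n)) G)
      (completeBipartiteGraph Unit (Fin l)))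
    (I : Finset (Fin n)) (hIsub : I ⊆ Uᶜ) (hIind : ∀ a ∈ I, ∀ b ∈ I, ¬ G.Adj a b)
    (hImax : ∀ J : Finset (Fin n), J ⊆ Uᶜ → (∀ a ∈ J, ∀ b ∈ J, ¬ G.Adj a b) → J.card ≤ I.card) :
    (G.edgeSet.ncard : ℤ) ≤
      (s : ℤ) * I.card + ((l : ℤ) - 1) * ((n : ℤ) - s - I.card) +
        (y : ℤ) * ((n : ℤ) - 2 * I.card - y) := by
  classical
  subst hpart hx hy
  have hcross : ∀ u ∈ U₁, ∀ u' ∈ U₂, G.Adj u u' := fun u hu u' hu' =>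
    (hbip u (mem_union_left _ hu) u' (mem_union_right _ hu')).2 (.inl ⟨hu, hu'⟩)
  obtain ⟨hind₁, hind₂⟩ := isIndepSet_and_isIndepSet_of_adj_iff hdisj hbip
  have hUU := card_interedges_union_self_le hdisj hind₁ hind₂
  have hUW := card_interedges_add_card_interedges_le (cliqueFree_three_of_free hG3) hcross hxy
    fun J hJ hind => hImax J hJ fun a ha b hb hab => hind ha hb hab.ne hab
  have hWW := card_interedges_self_le_of_isIndepSet hIsub (fun a ha b hb _ => hIind a ha b hb)
    fun v hv => Nat.le_sub_one_of_lt
      (card_filter_adj_lt_of_free_induce (free_iff_free.1 hSl) (sdiff_subset hv))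
  have hE := G.two_mul_card_edgeFinset_eq (U₁ ∪ U₂)
  rw [card_interedges_union_left hdisj (U₁ ∪ U₂)ᶜ] at hE
  have hW : #(U₁ ∪ U₂)ᶜ + s = n := by
    rw [← hUcard, card_compl_add_card, Fintype.card_fin]
  have hWI : #((U₁ ∪ U₂)ᶜ \ I) + #I = #(U₁ ∪ U₂)ᶜ := card_sdiff_add_card_eq_card hIsub
  rw [← coe_edgeFinset, Set.ncard_coe_finset]
  zify [hl] at hE hUU hUW hWW hW hWI hxys
  rw [eq_sub_of_add_eq hWI] at hWW
  rw [← hW, ← hxys]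
  linarith

theorem stmt15 (l s n x y : ℕ) (hl : 1 ≤ l) (G : SimpleGraph (Fin n))
    (hG3 : _root_.Free G (completeGraph (Fin 3)))
    (U U₁ U₂ : Finset (Fin n)) (hUcard : U.card = s)
    (hpart : U₁ ∪ U₂ = U) (hdisj : Disjoint U₁ U₂)
    (hx : U₁.card = x) (hy : U₂.card = y) (hxy : y ≤ x) (hxys : x + y = s)
    (hbip : ∀ a ∈ U, ∀ b ∈ U,
      (G.Adj a b ↔ ((a ∈ U₁ ∧ b ∈ U₂) ∨ (a ∈ U₂ ∧ b ∈ U₁))))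
    (hSl : _root_.Free (SimpleGraph.induce (↑(Uᶜ) : Set (Fin n)) G)
      (completeBipartiteGraph Unit (Fin l)))
    (I : Finset (Fin n)) (hIsub : I ⊆ Uᶜ) (hIind : ∀ a ∈ I, ∀ b ∈ I, ¬ G.Adj a b)
    (hImax : ∀ J : Finset (Fin n), J ⊆ Uᶜ → (∀ a ∈ J, ∀ b ∈ J, ¬ G.Adj a b) → J.card ≤ I.card)
    (hIbig : (n - s) / 2 < I.card) :
    (G.edgeSet.ncard : ℤ) ≤
      (s : ℤ) * I.card + ((l : ℤ) - 1) * ((n : ℤ) - s - I.card) +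
        (y : ℤ) * ((n : ℤ) - 2 * I.card - y) :=
  stmt15_general l s n x y hl G hG3 U U₁ U₂ hUcard hpart hdisj hx hy hxy hxys hbip hSl I hIsub hIind
    hImax
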